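/- Pointwise density domination between spherical Gaussians of nearby radii: Let n be a positive integer, μ ∈ ℝⁿ, and σ, σ' > 0 with σ²/(1 + 1/(10n)) ≤ σ'² ≤ σ². Then for every x ∈ ℝⁿ, the density of N(μ, σ²·I) at x is at least (9/10) times the density of N(μ, σ'²·I) at x. Consequently N(μ, σ²·I) can be written as a mixture 0.9·N(μ, σ'²·I) + 0.1·E for some probability distribution E. -/

import Mathlib

open MeasureTheory

/-- The density of the spherical Gaussian `N(μ, σ² I)` on `ℝⁿ`. -/
noncomputable def sphericalGaussianPdf (n : ℕ) (μ : EuclideanSpace ℝ (Fin n)) (σ : ℝ)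
    (x : EuclideanSpace ℝ (Fin n)) : ℝ :=
  (2 * Real.pi * σ ^ 2) ^ (-(n : ℝ) / 2) * Real.exp (-‖x - μ‖ ^ 2 / (2 * σ ^ 2))

/-- The spherical Gaussian measure `N(μ, σ² I)` on `ℝⁿ`. -/
noncomputable def sphericalGaussian (n : ℕ) (μ : EuclideanSpace ℝ (Fin n)) (σ : ℝ) :
    Measure (EuclideanSpace ℝ (Fin n)) :=
  volume.withDensity fun x => ENNReal.ofReal (sphericalGaussianPdf n μ σ x)

/-!
Since `σ' ≤ σ`, the wider Gaussian has the heavier tail, so the density ratio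
`p_σ / p_σ'` is at least the ratio `(σ'²/σ²)^(n/2)` of the normalising constants; and
`σ²/σ'² ≤ 1 + 1/(10n)` gives `(σ²/σ'²)^(n/2) ≤ e^(1/20) < 10/9`. Hence
`(9/10) N(μ, σ'² I) ≤ N(μ, σ² I)` as measures, and `E` is the remainder rescaled by `10`.
-/

open Real
open scoped ENNReal

theorem MeasureTheory.Measure.exists_isProbabilityMeasure_eq_smul_add_smul {α : Type*}
    [MeasurableSpace α] {μ ν : Measure α} [IsProbabilityMeasure μ] [IsProbabilityMeasure ν]
    {c : ℝ≥0∞} (hc : c < 1) (h : c • ν ≤ μ) :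
    ∃ E : Measure α, IsProbabilityMeasure E ∧ μ = c • ν + (1 - c) • E := by
  have : IsFiniteMeasure (c • ν) := isFiniteMeasure_of_le μ h
  have hc₀ : 1 - c ≠ 0 := (tsub_pos_of_lt hc).ne'
  have hc_top : 1 - c ≠ ∞ := ENNReal.sub_ne_top ENNReal.one_ne_top
  refine ⟨(1 - c)⁻¹ • (μ - c • ν), ⟨?_⟩, ?_⟩
  · simp [Measure.sub_apply MeasurableSet.univ h, ENNReal.inv_mul_cancel hc₀ hc_top]
  · rw [smul_smul, ENNReal.mul_inv_cancel hc₀ hc_top, one_smul, add_comm,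
      Measure.sub_add_cancel_of_le h]

theorem one_add_one_div_ten_mul_rpow_half_le (n : ℕ) :
    (1 + 1 / (10 * (n : ℝ))) ^ ((n : ℝ) / 2) ≤ 10 / 9 := by
  have hexponent : 1 / (10 * (n : ℝ)) * (n / 2) ≤ 1 / 20 := by
    rcases n.eq_zero_or_pos with rfl | hn
    · norm_num
    · have : (0 : ℝ) < n := by exact_mod_cast hn
      field_simp
      norm_num
  calc (1 + 1 / (10 * (n : ℝ))) ^ ((n : ℝ) / 2)
      ≤ rexp (1 / (10 * n)) ^ ((n : ℝ) / 2) := by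
        gcongr
        linarith [add_one_le_exp (1 / (10 * (n : ℝ)))]
    _ = rexp (1 / (10 * n) * (n / 2)) := (exp_mul _ _).symm
    _ ≤ rexp (1 / 20) := exp_le_exp.2 hexponent
    _ ≤ 1 / (1 - 1 / 20) := exp_bound_div_one_sub_of_interval (by norm_num) (by norm_num)
    _ ≤ 10 / 9 := by norm_num

section SphericalGaussian

variable {n : ℕ} {μ : EuclideanSpace ℝ (Fin n)} {σ σ' : ℝ}

theorem sphericalGaussianPdf_nonneg (x : EuclideanSpace ℝ (Fin n)) :
    0 ≤ sphericalGaussianPdf n μ σ x := by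
  unfold sphericalGaussianPdf
  positivity

theorem measurable_sphericalGaussianPdf : Measurable (sphericalGaussianPdf n μ σ) := by
  unfold sphericalGaussianPdf
  fun_prop

theorem integral_sphericalGaussianPdf (hσ : σ ≠ 0) :
    ∫ x, sphericalGaussianPdf n μ σ x = 1 := by
  have hb : 0 < 1 / (2 * σ ^ 2) := by positivity
  have hexp : ∀ x : EuclideanSpace ℝ (Fin n),
      -‖x - μ‖ ^ 2 / (2 * σ ^ 2) = -(1 / (2 * σ ^ 2)) * ‖x - μ‖ ^ 2 := fun x => by ring
  simp only [sphericalGaussianPdf, hexp, integral_const_mul,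
    integral_sub_right_eq_self (fun x => rexp (-(1 / (2 * σ ^ 2)) * ‖x‖ ^ 2)),
    GaussianFourier.integral_rexp_neg_mul_sq_norm hb, finrank_euclideanSpace_fin]
  rw [show π / (1 / (2 * σ ^ 2)) = 2 * π * σ ^ 2 by field_simp, ← rpow_add (by positivity), neg_div, neg_add_cancel, rpow_zero]

theorem isProbabilityMeasure_sphericalGaussian (hσ : σ ≠ 0) :
    IsProbabilityMeasure (sphericalGaussian n μ σ) := by
  have hint := integral_sphericalGaussianPdf (μ := μ) hσ
  constructor
  rw [sphericalGaussian, withDensity_apply _ MeasurableSet.univ, Measure.restrict_univ,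
    ← ofReal_integral_eq_lintegral_ofReal (integrable_of_integral_eq_one hint)
      (ae_of_all _ sphericalGaussianPdf_nonneg), hint, ENNReal.ofReal_one]

theorem rpow_mul_sphericalGaussianPdf_le (hσ' : σ' ≠ 0) (h : σ' ^ 2 ≤ σ ^ 2)
    (x : EuclideanSpace ℝ (Fin n)) :
    (σ' ^ 2 / σ ^ 2) ^ ((n : ℝ) / 2) * sphericalGaussianPdf n μ σ' x ≤
      sphericalGaussianPdf n μ σ x := by
  have hσ'2 : 0 < σ' ^ 2 := by positivity
  have hσ2 : 0 < σ ^ 2 := hσ'2.trans_le h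
  have hconst : (σ' ^ 2 / σ ^ 2) ^ ((n : ℝ) / 2) * (2 * π * σ' ^ 2) ^ (-(n : ℝ) / 2) =
      (2 * π * σ ^ 2) ^ (-(n : ℝ) / 2) := by
    rw [neg_div, rpow_neg (by positivity), rpow_neg (by positivity), ← div_eq_mul_inv,
      ← div_rpow (by positivity) (by positivity), ← inv_rpow (by positivity)]
    congr 1
    field_simp
  have htail : rexp (-‖x - μ‖ ^ 2 / (2 * σ' ^ 2)) ≤ rexp (-‖x - μ‖ ^ 2 / (2 * σ ^ 2)) := by
    rw [exp_le_exp, neg_div, neg_div, neg_le_neg_iff]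
    gcongr
  rw [sphericalGaussianPdf, ← mul_assoc, hconst, sphericalGaussianPdf]
  gcongr

theorem nine_div_ten_mul_sphericalGaussianPdf_le (hσ : 0 < σ) (hσ' : 0 < σ')
    (h1 : σ ^ 2 / (1 + 1 / (10 * (n : ℝ))) ≤ σ' ^ 2) (h2 : σ' ^ 2 ≤ σ ^ 2)
    (x : EuclideanSpace ℝ (Fin n)) :
    9 / 10 * sphericalGaussianPdf n μ σ' x ≤ sphericalGaussianPdf n μ σ x := by
  set a : ℝ := 1 + 1 / (10 * (n : ℝ))
  have ha : 0 < a := by positivity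
  have hratio : a⁻¹ ≤ σ' ^ 2 / σ ^ 2 := by
    rwa [le_div_iff₀ (by positivity), ← div_eq_inv_mul]
  have hconst : 9 / 10 ≤ (σ' ^ 2 / σ ^ 2) ^ ((n : ℝ) / 2) :=
    calc (9 / 10 : ℝ) ≤ (a ^ ((n : ℝ) / 2))⁻¹ := by
          rw [le_inv_comm₀ (by norm_num) (by positivity)]
          exact (one_add_one_div_ten_mul_rpow_half_le n).trans_eq (by norm_num)
      _ = a⁻¹ ^ ((n : ℝ) / 2) := (inv_rpow ha.le _).symm
      _ ≤ (σ' ^ 2 / σ ^ 2) ^ ((n : ℝ) / 2) := by gcongr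
  calc 9 / 10 * sphericalGaussianPdf n μ σ' x
      ≤ (σ' ^ 2 / σ ^ 2) ^ ((n : ℝ) / 2) * sphericalGaussianPdf n μ σ' x :=
        mul_le_mul_of_nonneg_right hconst (sphericalGaussianPdf_nonneg x)
    _ ≤ sphericalGaussianPdf n μ σ x := rpow_mul_sphericalGaussianPdf_le hσ'.ne' h2 x

theorem smul_sphericalGaussian_le {c : ℝ}
    (h : ∀ x, c * sphericalGaussianPdf n μ σ' x ≤ sphericalGaussianPdf n μ σ x) :
    ENNReal.ofReal c • sphericalGaussian n μ σ' ≤ sphericalGaussian n μ σ := by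
  rw [sphericalGaussian, ← withDensity_smul _ measurable_sphericalGaussianPdf.ennreal_ofReal]
  refine withDensity_mono (ae_of_all _ fun x => ?_)
  rw [Pi.smul_apply, smul_eq_mul, ← ENNReal.ofReal_mul' (sphericalGaussianPdf_nonneg x)]
  exact ENNReal.ofReal_le_ofReal (h x)

end SphericalGaussian

theorem stmt_11 (n : ℕ) (μ : EuclideanSpace ℝ (Fin n)) (σ σ' : ℝ)
    (hσ : 0 < σ) (hσ' : 0 < σ')
    (h1 : σ ^ 2 / (1 + 1 / (10 * (n : ℝ))) ≤ σ' ^ 2) (h2 : σ' ^ 2 ≤ σ ^ 2) :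
    (∀ x : EuclideanSpace ℝ (Fin n),
      (9 / 10) * sphericalGaussianPdf n μ σ' x ≤ sphericalGaussianPdf n μ σ x) ∧
    ∃ E : Measure (EuclideanSpace ℝ (Fin n)), IsProbabilityMeasure E ∧
      sphericalGaussian n μ σ =
        ENNReal.ofReal (9 / 10) • sphericalGaussian n μ σ' + ENNReal.ofReal (1 / 10) • E := by
  have hdom := nine_div_ten_mul_sphericalGaussianPdf_le (μ := μ) hσ hσ' h1 h2
  have := isProbabilityMeasure_sphericalGaussian (n := n) (μ := μ) hσ.ne'
  have := isProbabilityMeasure_sphericalGaussian (n := n) (μ := μ) hσ'.ne'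
  obtain ⟨E, hE, hmix⟩ := Measure.exists_isProbabilityMeasure_eq_smul_add_smul
    (ENNReal.ofReal_lt_one.2 (by norm_num)) (smul_sphericalGaussian_le hdom)
  refine ⟨hdom, E, hE, ?_⟩
  rwa [← ENNReal.ofReal_one, ← ENNReal.ofReal_sub _ (by norm_num), show (1 : ℝ) - 9 / 10 = 1 / 10 by norm_num]
    at hmix
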